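/- arXiv:1707.03387 — 5 statements merged into one kernel-verified Lean document; each statement's English description precedes it below -/
import Mathlib

section
/- (Maximum length of the live list, Theorem 3.1.) Let m, k, l be natural numbers with 1 ≤ l ≤ k − 1 ≤ m − 1, and let 0 = i₀ < i₁ < ⋯ < i_l be a strictly increasing sequence of natural numbers with i_l ≤ m − k + l. Then the cardinality of the set {(j, t) : 1 ≤ j ≤ l, i_{j−1} < t < i_j} plus the cardinality of the set {t : i_l < t ≤ m − k + l} equals m − k. Consequently, when the LIFO node-selection rule and the minimum solution tree are used, the number of live nodes immediately after branching any node (the live nodes at levels 1, …, l together with the newly added non-leaf children of the branched node) is at most m − k, and this bound is attained. -/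
/-!
The live nodes at level `j` fill the gap strictly between `i_{j-1}` and `i_j`, so there are
`i_j - i_{j-1} - 1` of them, and these counts telescope to `i_l - i₀ - l = i_l - l`. The stored children of the branched node are the
`m - k + l - i_l` indices above `i_l`, and the two counts add up to `m - k`.
-/

open Finset

variable {l : ℕ}

def gapPairs (i : Fin (l + 1) → ℕ) : Finset (ℕ × ℕ) :=
  univ.biUnion fun j : Fin l => (Ioo (i j.castSucc) (i j.succ)).image (Prod.mk (j + 1))

theorem card_gapPairs (i : Fin (l + 1) → ℕ) :
    (gapPairs i).card = ∑ j : Fin l, (i j.succ - i j.castSucc - 1) := by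
  rw [gapPairs, card_biUnion]
  · simp [card_image_of_injective _ (Prod.mk_right_injective _)]
  · intro a _ b _ hab
    simp only [Function.onFun, disjoint_left, mem_image]
    rintro _ ⟨_, _, rfl⟩ ⟨_, _, hb⟩
    exact hab (Fin.ext (by simpa using (Prod.ext_iff.mp hb).1.symm))

theorem sum_gaps_add_add_eq_last (i : Fin (l + 1) → ℕ) (hi : StrictMono i) :
    ∑ j : Fin l, (i j.succ - i j.castSucc - 1) + i 0 + l = i (Fin.last l) := by
  induction l with
  | zero => simp
  | succ l ih =>
    have hinit := ih (i ∘ Fin.castSucc) (hi.comp Fin.strictMono_castSucc)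
    have hstep : i (Fin.last l).castSucc < i (Fin.last (l + 1)) :=
      hi (Fin.castSucc_lt_last _)
    simp only [Function.comp_apply, ← Fin.succ_castSucc, Fin.castSucc_zero] at hinit
    simp only [Fin.sum_univ_castSucc, Fin.succ_last, Nat.succ_eq_add_one]
    omega

theorem setOf_gaps_eq_gapPairs (i : Fin (l + 1) → ℕ) :
    {p : ℕ × ℕ | ∃ (h1 : 1 ≤ p.1) (h2 : p.1 ≤ l),
      i ⟨p.1 - 1, by omega⟩ < p.2 ∧ p.2 < i ⟨p.1, by omega⟩} = ↑(gapPairs i) := by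
  ext ⟨a, t⟩
  simp only [gapPairs, Set.mem_ofPred_eq, coe_biUnion, coe_univ, Set.mem_univ, Set.iUnion_true,
    Set.mem_iUnion, coe_image, coe_Ioo, Set.mem_image, Set.mem_Ioo, Prod.mk.injEq]
  constructor
  · rintro ⟨h1, h2, hlo, hhi⟩
    have hsucc : (⟨a - 1, by omega⟩ : Fin l).succ = ⟨a, by omega⟩ := Fin.ext (Nat.sub_add_cancel h1)
    exact ⟨⟨a - 1, by omega⟩, t, ⟨hlo, hsucc ▸ hhi⟩, Nat.sub_add_cancel h1, rfl⟩
  · rintro ⟨j, t, ⟨hlo, hhi⟩, rfl, rfl⟩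
    exact ⟨by omega, j.isLt, hlo, hhi⟩

/-- (Maximum length of the live list, Theorem 3.1.)  Let `m, k, l` be natural numbers with
`1 ≤ l ≤ k - 1 ≤ m - 1` (i.e. `1 ≤ l`, `l + 1 ≤ k`, `k ≤ m`), and let
`0 = i₀ < i₁ < ⋯ < i_l` be a strictly increasing sequence of naturals with
`i_l ≤ m - k + l`.  Then the number of pairs `(j, t)` with `1 ≤ j ≤ l` and
`i_{j-1} < t < i_j` (the live nodes at levels `1, …, l`), plus the number of `t` with
`i_l < t ≤ m - k + l` (the newly added non-leaf children of the branched node), equals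
`m - k`.  Hence with the LIFO rule and the minimum solution tree the live list has at most
`m - k` nodes, and this bound is attained. -/
theorem live_list_length_eq (m k l : ℕ)
    (i : Fin (l + 1) → ℕ) (hmono : StrictMono i) (h0 : i 0 = 0)
    (hlast : i (Fin.last l) ≤ m - k + l) :
    Set.ncard {p : ℕ × ℕ | ∃ (h1 : 1 ≤ p.1) (h2 : p.1 ≤ l),
      i ⟨p.1 - 1, by omega⟩ < p.2 ∧ p.2 < i ⟨p.1, by omega⟩} +
    Set.ncard {t : ℕ | i (Fin.last l) < t ∧ t ≤ m - k + l} =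
    m - k := by
  have hgaps := sum_gaps_add_add_eq_last i hmono
  rw [setOf_gaps_eq_gapPairs, Set.ncard_coe_finset, card_gapPairs]
  change _ + (Set.Ioc _ _).ncard = _
  rw [Set.ncard_Ioc_nat]
  omega
end

section
/- Let E be a real inner product space, P a finite set of points of E, k a natural number, x ∈ E and r ≥ 0. If the closed ball of center x and radius r contains at least k points of P, then the number of unordered pairs {p, q} of distinct points of P with dist(p, q) ≤ 2r is at least k(k−1)/2. Consequently, twice the optimal radius of the minimum k-enclosing ball of P is at least the (k(k−1)/2)-th smallest pairwise distance of P. -/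
/-- The multiset of pairwise distances of a finite set `P`: the distances between the two
elements of each unordered pair `{p, q}` of distinct points of `P`. -/
noncomputable def pairwiseDists {E : Type*} [NormedAddCommGroup E] [InnerProductSpace ℝ E]
    (P : Finset E) : Multiset ℝ :=
  letI := Classical.decEq E
  (P.sym2.filter fun s => ¬ s.IsDiag).val.map
    (Sym2.lift ⟨fun p q => dist p q, fun p q => dist_comm p q⟩)

open Finset in
lemma key {E : Type*} [NormedAddCommGroup E] [InnerProductSpace ℝ E]
    (P : Finset E) (k : ℕ) (y : E) (s : ℝ)
    (hcov : k ≤ (P.filter fun p => dist y p ≤ s).card) :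
    k * (k - 1) / 2 ≤ Multiset.card ((pairwiseDists P).filter fun d => d ≤ 2 * s) := by
  classical
  set f := (Sym2.lift ⟨fun p q => dist p q, fun p q => dist_comm p q⟩ : Sym2 E → ℝ) with hf
  set Q := P.filter fun p => dist y p ≤ s with hQ
  have hcard : Multiset.card ((pairwiseDists P).filter fun d => d ≤ 2 * s)
      = ((P.sym2.filter fun z => ¬ z.IsDiag).filter fun z => f z ≤ 2 * s).card := by
    rw [pairwiseDists]
    rw [Multiset.filter_map]
    rw [Multiset.card_map]
    rfl
  rw [hcard]
  have hsub : (Q.sym2.filter fun z => ¬ z.IsDiag)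
      ⊆ ((P.sym2.filter fun z => ¬ z.IsDiag).filter fun z => f z ≤ 2 * s) := by
    intro z hz
    induction z using Sym2.ind with
    | _ a b =>
      simp only [Finset.mem_filter, Finset.mk_mem_sym2_iff] at hz ⊢
      obtain ⟨⟨ha, hb⟩, hd⟩ := hz
      rw [hQ, Finset.mem_filter] at ha hb
      refine ⟨⟨⟨ha.1, hb.1⟩, hd⟩, ?_⟩
      calc f s(a, b) = dist a b := rfl
        _ ≤ dist a y + dist y b := dist_triangle a y b
        _ ≤ s + s := by
            rw [dist_comm a y]; exact add_le_add ha.2 hb.2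
        _ = 2 * s := by ring
  have hQcard : (Q.sym2.filter fun z => ¬ z.IsDiag).card = Q.card.choose 2 := by
    rw [Finset.sym2_eq_image, Sym2.filter_image_mk_not_isDiag, Sym2.card_image_offDiag]
  calc k * (k - 1) / 2 = k.choose 2 := (Nat.choose_two_right k).symm
    _ ≤ Q.card.choose 2 := Nat.choose_le_choose 2 hcov
    _ = (Q.sym2.filter fun z => ¬ z.IsDiag).card := hQcard.symm
    _ ≤ _ := Finset.card_le_card hsub

/-- If a closed ball of center `x` and radius `r ≥ 0` contains at least `k` points of `P`,
then at least `k(k-1)/2` unordered pairs `{p, q}` of distinct points of `P` satisfy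
`dist p q ≤ 2r`.  Consequently, twice the optimal radius of the minimum `k`-enclosing ball
of `P` is at least the `(k(k-1)/2)`-th smallest pairwise distance of `P` (i.e. at least
`k(k-1)/2` pairwise distances of `P` are at most twice the optimal radius). -/
theorem pair_count_lower_bound {E : Type*} [NormedAddCommGroup E] [InnerProductSpace ℝ E]
    (P : Finset E) (k : ℕ) (x : E) (r : ℝ) (hr : 0 ≤ r)
    (hcov : k ≤ (P.filter fun p => dist x p ≤ r).card) :
    k * (k - 1) / 2 ≤ Multiset.card ((pairwiseDists P).filter fun d => d ≤ 2 * r) ∧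
    k * (k - 1) / 2 ≤ Multiset.card ((pairwiseDists P).filter fun d =>
      d ≤ 2 * sInf {s : ℝ | 0 ≤ s ∧
        ∃ y : E, k ≤ (P.filter fun p => dist y p ≤ s).card}) := by
  classical
  refine ⟨key P k x r hcov, ?_⟩
  set S : Set ℝ := {s : ℝ | 0 ≤ s ∧ ∃ y : E, k ≤ (P.filter fun p => dist y p ≤ s).card} with hS
  have hrS : r ∈ S := ⟨hr, x, hcov⟩
  have hne : S.Nonempty := ⟨r, hrS⟩
  have hbdd : BddBelow S := ⟨0, fun s hs => hs.1⟩
  set m := sInf S with hm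
  have hm0 : 0 ≤ m := le_csInf hne fun s hs => hs.1
  -- distances strictly above 2m
  set T := (pairwiseDists P).toFinset.filter fun d => 2 * m < d with hT
  by_cases hTe : T.Nonempty
  · set dmin := T.min' hTe with hdmin
    have hdm : 2 * m < dmin := (Finset.mem_filter.1 (T.min'_mem hTe)).2
    have hmlt : m < dmin / 2 := by linarith
    obtain ⟨s', hs'S, hs'lt⟩ := exists_lt_of_csInf_lt hne hmlt
    obtain ⟨hs'0, y, hy⟩ := hs'S
    have h1 := key P k y s' hy
    refine h1.trans (Multiset.card_le_card ?_)
    rw [Multiset.le_iff_count]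
    intro a
    rw [Multiset.count_filter, Multiset.count_filter]
    by_cases hpa : a ≤ 2 * s'
    · simp only [hpa, if_true]
      by_cases hqa : a ≤ 2 * m
      · simp [hqa]
      · push_neg at hqa
        by_cases hmem : a ∈ pairwiseDists P
        · exfalso
          have haT : a ∈ T := Finset.mem_filter.2 ⟨Multiset.mem_toFinset.2 hmem, hqa⟩
          have := T.min'_le a haT
          linarith
        · simp [Multiset.count_eq_zero_of_notMem hmem]
    · simp [hpa]
  · -- all distances are ≤ 2m
    have hall : ∀ a ∈ pairwiseDists P, a ≤ 2 * m := by
      intro a ha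
      by_contra hlt
      exact hTe ⟨a, Finset.mem_filter.2 ⟨Multiset.mem_toFinset.2 ha, not_le.1 hlt⟩⟩
    rw [Multiset.filter_eq_self.2 hall]
    exact (key P k x r hcov).trans (Multiset.card_le_card (Multiset.filter_le _ _))
end

section
/- Let E be a real inner product space, x, q ∈ E, r ≥ 0, and set d := dist(q, x). Assume d ≥ r. Then there exists a point y ∈ E (namely y = x + ((d − r)/(2d)) · (q − x) when d > 0) such that the closed ball of center y and radius (d + r)/2 contains both q and the entire closed ball of center x and radius r. Consequently, for any nonempty finite set P contained in the closed ball of center x and radius r, the minimum enclosing radius satisfies r(P ∪ {q}) ≤ (1/2)(dist(q, x) + r). -/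
/-! Put `d := dist q x`. A point `y` on the segment from `x` to `q` with `dist x y ≤ (d - r)/2`
and `dist y q ≤ (d + r)/2` exists since these two radii add up to `d`; by the triangle
inequality the ball of radius `(d + r)/2` around `y` then swallows the ball of radius `r`
around `x`, and `y` is a center witnessing the bound on the minimum enclosing radius. -/

open scoped Classical

/-- The minimum enclosing radius of a finite set `Q` of points in a real inner product
space: the infimum over centers `x` of the maximum distance from `x` to the points of `Q`. -/
noncomputable def mebRadius {E : Type*} [NormedAddCommGroup E] [InnerProductSpace ℝ E]
    (Q : Finset E) : ℝ :=
  ⨅ x : E, ⨆ p ∈ Q, dist x p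

open Metric

theorem mebRadius_le_of_subset_closedBall {E : Type*} [NormedAddCommGroup E]
    [InnerProductSpace ℝ E] {Q : Finset E} {y : E} {R : ℝ} (hR : 0 ≤ R)
    (hQ : (Q : Set E) ⊆ closedBall y R) : mebRadius Q ≤ R := by
  have hbdd : BddBelow (Set.range fun z : E => ⨆ p ∈ Q, dist z p) :=
    ⟨0, by
      rintro _ ⟨z, rfl⟩
      exact Real.iSup_nonneg fun p => Real.iSup_nonneg fun _ => dist_nonneg⟩
  calc mebRadius Q ≤ ⨆ p ∈ Q, dist y p := ciInf_le hbdd y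
    _ ≤ R := Real.iSup_le (fun p => Real.iSup_le
        (fun hp => mem_closedBall'.mp (hQ hp)) hR) hR

/-- Let `x, q` be points of a real inner product space, `r ≥ 0`, `d := dist q x`, and
assume `d ≥ r`.  Then there is a point `y` such that the closed ball of center `y` and
radius `(d + r)/2` contains both `q` and the whole closed ball of center `x` and radius
`r`.  Consequently, for any nonempty finite set `P` contained in the closed ball of center
`x` and radius `r`, the minimum enclosing radius satisfies
`r(P ∪ {q}) ≤ (1/2)(dist(q, x) + r)`. -/
theorem mebRadius_insert_upper_bound {E : Type*} [NormedAddCommGroup E]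
    [InnerProductSpace ℝ E] (x q : E) (r : ℝ) (hr : 0 ≤ r) (hd : r ≤ dist q x) :
    (∃ y : E, q ∈ Metric.closedBall y ((dist q x + r) / 2) ∧
      Metric.closedBall x r ⊆ Metric.closedBall y ((dist q x + r) / 2)) ∧
    ∀ P : Finset E, P.Nonempty → (P : Set E) ⊆ Metric.closedBall x r →
      mebRadius (insert q P) ≤ (1 / 2) * (dist q x + r) := by
  obtain ⟨y, hxy, hyq⟩ : ∃ y, dist x y ≤ (dist q x - r) / 2 ∧ dist y q ≤ (dist q x + r) / 2 :=
    exists_dist_le_le (by linarith) (by linarith) (by rw [dist_comm]; linarith)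
  have hq : q ∈ closedBall y ((dist q x + r) / 2) := mem_closedBall'.mpr hyq
  have hball : closedBall x r ⊆ closedBall y ((dist q x + r) / 2) :=
    closedBall_subset_closedBall' (by linarith)
  refine ⟨⟨y, hq, hball⟩, fun P _ hP => ?_⟩
  rw [one_div_mul_eq_div]
  refine mebRadius_le_of_subset_closedBall (y := y) (by positivity) ?_
  rw [Finset.coe_insert]
  exact Set.insert_subset hq (hP.trans hball)
end

section
/- Let E be a finite-dimensional real inner product space, P a nonempty finite set of points of E, and q ∈ E. Suppose r(P ∪ {q}) > r(P), i.e., adding q strictly increases the minimum enclosing radius. Then for any optimal center c of P ∪ {q}, i.e., any c ∈ E with max_{p ∈ P ∪ {q}} dist(c, p) = r(P ∪ {q}), the point q lies on the boundary of the optimal ball: dist(c, q) = r(P ∪ {q}). -/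
open scoped Classical

lemma biSup_dist_eq_sup' {E : Type*} [NormedAddCommGroup E]
    (Q : Finset E) (hQ : Q.Nonempty) (x : E) :
    (⨆ p ∈ Q, dist x p) = Q.sup' hQ (dist x) := by
  have hQ' := hQ
  obtain ⟨p0, hp0⟩ := hQ'
  have hs0 : (0:ℝ) ≤ Q.sup' hQ (dist x) :=
    le_trans dist_nonneg (Finset.le_sup' _ hp0)
  have key : ∀ p ∈ Q, (⨆ _ : p ∈ Q, dist x p) = dist x p := fun p hp => ciSup_pos hp
  have keyn : ∀ p, p ∉ Q → (⨆ _ : p ∈ Q, dist x p) = 0 := by intro p hp; simp [hp]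
  have hb : BddAbove (Set.range fun p => ⨆ _ : p ∈ Q, dist x p) := by
    refine ⟨Q.sup' hQ (dist x), ?_⟩
    rintro _ ⟨p, rfl⟩
    show (⨆ _ : p ∈ Q, dist x p) ≤ _
    by_cases hp : p ∈ Q
    · rw [key p hp]; exact Finset.le_sup' _ hp
    · rw [keyn p hp]; exact hs0
  apply le_antisymm
  · apply ciSup_le
    intro p
    by_cases hp : p ∈ Q
    · rw [key p hp]; exact Finset.le_sup' _ hp
    · rw [keyn p hp]; exact hs0
  · apply Finset.sup'_le
    intro p hp
    calc dist x p = ⨆ _ : p ∈ Q, dist x p := (key p hp).symm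
    _ ≤ _ := le_ciSup hb p

lemma mebRadius_eq_sup' {E : Type*} [NormedAddCommGroup E] [InnerProductSpace ℝ E]
    (Q : Finset E) (hQ : Q.Nonempty) :
    mebRadius Q = ⨅ x : E, Q.sup' hQ (dist x) :=
  iInf_congr (biSup_dist_eq_sup' Q hQ)

lemma dist_convex_combo {E : Type*} [NormedAddCommGroup E] [NormedSpace ℝ E]
    (c x p : E) (t : ℝ) (ht0 : 0 ≤ t) (ht1 : t ≤ 1) :
    dist ((1 - t) • c + t • x) p ≤ (1 - t) * dist c p + t * dist x p := by
  have h : (1 - t) • c + t • x - p = (1 - t) • (c - p) + t • (x - p) := by module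
  rw [dist_eq_norm, h, dist_eq_norm, dist_eq_norm]
  calc ‖(1 - t) • (c - p) + t • (x - p)‖ ≤ ‖(1 - t) • (c - p)‖ + ‖t • (x - p)‖ :=
        norm_add_le _ _
  _ = (1 - t) * ‖c - p‖ + t * ‖x - p‖ := by
        rw [norm_smul, norm_smul, Real.norm_eq_abs, Real.norm_eq_abs,
          abs_of_nonneg (by linarith), abs_of_nonneg ht0]

/-- In a finite-dimensional real inner product space, if adding a point `q` to a nonempty
finite set `P` strictly increases the minimum enclosing radius, then for any optimal
center `c` of `P ∪ {q}`, the point `q` lies on the boundary of the optimal ball: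
`dist c q = r(P ∪ {q})`. -/
theorem new_point_on_boundary {E : Type*} [NormedAddCommGroup E] [InnerProductSpace ℝ E]
    [FiniteDimensional ℝ E] (P : Finset E) (hP : P.Nonempty) (q : E)
    (hgrow : mebRadius P < mebRadius (insert q P)) (c : E)
    (hc : (⨆ p ∈ insert q P, dist c p) = mebRadius (insert q P)) :
    dist c q = mebRadius (insert q P) := by
  set Q : Finset E := insert q P with hQdef
  have hQ : Q.Nonempty := ⟨q, Finset.mem_insert_self q P⟩
  set R : ℝ := mebRadius Q with hR
  have hc' : Q.sup' hQ (dist c) = R := by rw [← biSup_dist_eq_sup' Q hQ]; exact hc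
  have hdle : dist c q ≤ R := hc' ▸ Finset.le_sup' (dist c) (Finset.mem_insert_self q P)
  by_contra hne
  have hd : dist c q < R := lt_of_le_of_ne hdle hne
  -- a better center for P
  have hPlt : (⨅ x : E, P.sup' hP (dist x)) < R := by
    rw [← mebRadius_eq_sup' P hP]; exact hgrow
  obtain ⟨x, hx⟩ := exists_lt_of_ciInf_lt hPlt
  set d : ℝ := dist c q with hdd
  set D : ℝ := dist x q with hDD
  have hD0 : 0 ≤ D := dist_nonneg
  have hd0 : 0 ≤ d := dist_nonneg
  set t : ℝ := min 1 ((R - d) / (2 * (D + 1))) with htdef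
  have hRd : 0 < R - d := by linarith
  have ht0 : 0 < t := lt_min one_pos (by positivity)
  have ht1 : t ≤ 1 := min_le_left _ _
  have htle : t ≤ (R - d) / (2 * (D + 1)) := min_le_right _ _
  set c' : E := (1 - t) • c + t • x with hc'def
  have hbound : ∀ p, dist c' p ≤ (1 - t) * dist c p + t * dist x p := fun p =>
    dist_convex_combo c x p t ht0.le ht1
  have hsup : ∀ p ∈ Q, dist c' p < R := by
    intro p hp
    rcases Finset.mem_insert.mp hp with rfl | hpP
    · have h1 := hbound p
      have htD : t * D < R - d := by
        have h2 : t * (2 * (D + 1)) ≤ R - d :=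
          (le_div_iff₀ (by positivity : (0:ℝ) < 2 * (D + 1))).mp htle
        nlinarith
      nlinarith [h1]
    · have h1 := hbound p
      have h2 : dist c p ≤ R := hc' ▸ Finset.le_sup' (dist c) hp
      have h3 : dist x p ≤ P.sup' hP (dist x) := Finset.le_sup' (dist x) hpP
      nlinarith
  have hlt : Q.sup' hQ (dist c') < R := by
    rw [Finset.sup'_lt_iff]; exact hsup
  have hbb : BddBelow (Set.range fun y : E => Q.sup' hQ (dist y)) := by
    refine ⟨0, ?_⟩
    rintro _ ⟨y, rfl⟩
    exact le_trans dist_nonneg (Finset.le_sup' (dist y) (Finset.mem_insert_self q P))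
  have : R ≤ Q.sup' hQ (dist c') := by
    rw [hR, mebRadius_eq_sup' Q hQ]
    exact ciInf_le hbb c'
  linarith
end

section
/- Let E be a finite-dimensional real inner product space, p₁, …, p_m points of E, and 1 ≤ k ≤ m. Let r* denote the optimal value of the minimum k-enclosing ball problem for P = {p₁, …, p_m}, and suppose (x*, r*) is an optimal solution (a ball of radius r* covering at least k points of P). Let v₁, …, v_m ∈ E be points all contained in the closed ball of center x* and radius r*. Then the mixed-integer program min over x ∈ E and β ∈ {0,1}^m with ∑_{j=1}^m β_j ≥ k of max_{1 ≤ j ≤ m} dist(x, β_j·p_j + (1 − β_j)·v_j) has optimal value exactly r*. -/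
/-- Validity of the mixed-integer second-order-cone formulation (3.3) of the minimum
`k`-enclosing ball problem.  Let `p₁, …, p_m` be points of a finite-dimensional real inner
product space, `1 ≤ k ≤ m`, let `r*` be the optimal value of the minimum `k`-enclosing
ball problem and `(x*, r*)` an optimal solution (a ball of radius `r*` centered at `x*`
covering at least `k` of the points).  If `v₁, …, v_m` all lie in the closed ball of
center `x*` and radius `r*`, then the mixed-integer program
`min over x and β ∈ {0,1}^m with ∑ β_j ≥ k of max_j dist(x, β_j • p_j + (1 - β_j) • v_j)`
has optimal value exactly `r*`. -/
theorem misocp_formulation_valid {E : Type*} [NormedAddCommGroup E]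
    [InnerProductSpace ℝ E] [FiniteDimensional ℝ E]
    (m k : ℕ) (hk : 1 ≤ k) (hkm : k ≤ m) (p : Fin m → E)
    (rStar : ℝ) (xStar : E)
    (hopt : rStar =
      sInf {r : ℝ | 0 ≤ r ∧
        ∃ x : E, k ≤ (Finset.univ.filter fun j : Fin m => dist x (p j) ≤ r).card})
    (hfeas : k ≤ (Finset.univ.filter fun j : Fin m => dist xStar (p j) ≤ rStar).card)
    (v : Fin m → E) (hv : ∀ j, dist xStar (v j) ≤ rStar) :
    sInf {ρ : ℝ | ∃ (x : E) (β : Fin m → ℝ),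
        (∀ j, β j = 0 ∨ β j = 1) ∧
        (k : ℝ) ≤ ∑ j, β j ∧
        ρ = ⨆ j, dist x (β j • p j + (1 - β j) • v j)} = rStar := by
  have hm : 0 < m := lt_of_lt_of_le hk hkm
  haveI : Nonempty (Fin m) := ⟨⟨0, hm⟩⟩
  set S : Set ℝ := {ρ : ℝ | ∃ (x : E) (β : Fin m → ℝ),
        (∀ j, β j = 0 ∨ β j = 1) ∧
        (k : ℝ) ≤ ∑ j, β j ∧
        ρ = ⨆ j, dist x (β j • p j + (1 - β j) • v j)} with hS
  -- the candidate solution built from (xStar, rStar)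
  set β₀ : Fin m → ℝ := fun j => if dist xStar (p j) ≤ rStar then 1 else 0 with hβ₀
  have hρ₀mem : (⨆ j, dist xStar (β₀ j • p j + (1 - β₀ j) • v j)) ∈ S := by
    refine ⟨xStar, β₀, fun j => ?_, ?_, rfl⟩
    · by_cases h : dist xStar (p j) ≤ rStar <;> simp [hβ₀, h]
    · have : ∑ j, β₀ j =
          ((Finset.univ.filter fun j : Fin m => dist xStar (p j) ≤ rStar).card : ℝ) := by
        rw [Finset.card_filter]
        push_cast
        exact Finset.sum_congr rfl fun j _ => rfl
      rw [this]
      exact_mod_cast hfeas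
  have hρ₀le : (⨆ j, dist xStar (β₀ j • p j + (1 - β₀ j) • v j)) ≤ rStar := by
    apply ciSup_le
    intro j
    by_cases h : dist xStar (p j) ≤ rStar
    · simp [hβ₀, h]
    · simpa [hβ₀, h] using hv j
  -- every element of S is ≥ 0 and feasible for the original problem
  have key : ∀ ρ ∈ S, 0 ≤ ρ ∧
      ∃ x : E, k ≤ (Finset.univ.filter fun j : Fin m => dist x (p j) ≤ ρ).card := by
    rintro ρ ⟨x, β, hβ, hsum, rfl⟩
    have hbdd : BddAbove (Set.range fun j => dist x (β j • p j + (1 - β j) • v j)) :=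
      Set.Finite.bddAbove (Set.finite_range _)
    have hle : ∀ j, dist x (β j • p j + (1 - β j) • v j) ≤
        ⨆ j, dist x (β j • p j + (1 - β j) • v j) := fun j => le_ciSup hbdd j
    constructor
    · exact le_trans dist_nonneg (hle (Classical.arbitrary _))
    · refine ⟨x, ?_⟩
      have hsub : (Finset.univ.filter fun j : Fin m => β j = 1) ⊆
          (Finset.univ.filter fun j : Fin m =>
            dist x (p j) ≤ ⨆ j, dist x (β j • p j + (1 - β j) • v j)) := by
        intro j hj
        simp only [Finset.mem_filter, Finset.mem_univ, true_and] at hj ⊢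
        have := hle j
        rw [hj] at this
        simpa using this
      have hcard : (k : ℝ) ≤ ((Finset.univ.filter fun j : Fin m => β j = 1).card : ℝ) := by
        refine le_trans hsum ?_
        rw [Finset.card_filter]
        push_cast
        apply Finset.sum_le_sum
        intro j _
        rcases hβ j with h | h <;> simp [h]
      have : k ≤ (Finset.univ.filter fun j : Fin m => β j = 1).card := by exact_mod_cast hcard
      exact le_trans this (Finset.card_le_card hsub)
  have hbddS : BddBelow S := ⟨0, fun ρ hρ => (key ρ hρ).1⟩
  apply le_antisymm
  · calc sInf S ≤ _ := csInf_le hbddS hρ₀mem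
      _ ≤ rStar := hρ₀le
  · refine le_csInf ⟨_, hρ₀mem⟩ ?_
    intro ρ hρ
    rw [hopt]
    have hbdd' : BddBelow {r : ℝ | 0 ≤ r ∧
        ∃ x : E, k ≤ (Finset.univ.filter fun j : Fin m => dist x (p j) ≤ r).card} :=
      ⟨0, fun r hr => hr.1⟩
    exact csInf_le hbdd' (key ρ hρ)
end
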